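/- Let φ = (φ_1,…,φ_n) : 𝔹_n → 𝔹_n be holomorphic and suppose C_φ is an isometry on the Bloch space of 𝔹_n. Then: (a) the component functions φ_1,…,φ_n are linearly independent over ℂ; (b) φ(0) = 0; (c) each component φ_j has Bloch seminorm β_{φ_j} = √(2/(n+1)). -/

import Mathlib

/-!
Test the isometry on the affine functions `z ↦ ⟪w, z⟫ + c`. Since the Bergman metric is smallest
at the origin, where it is `(n+1)/2` times the Euclidean one, their Bloch seminorm is
`‖w‖ √(2/(n+1))`. Comparing the norm identities for `c = 0` and `c = -⟪w, φ 0⟫` forces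
`⟪w, φ 0⟫ = 0` and `β(⟪w, φ⟫) = ‖w‖ √(2/(n+1))` for every `w`; a vanishing combination of the
components has seminorm `0`, so its coefficient vector is `0`.
-/

open Complex Metric Set

/-- The Bergman metric on the unit ball `𝔹_n ⊆ ℂⁿ`:
`H_z(u,ū) = (n+1)[(1-‖z‖²)‖u‖² + |⟨u,z⟩|²] / (2(1-‖z‖²)²)`. -/
noncomputable def bergmanH (n : ℕ) (z u : EuclideanSpace ℂ (Fin n)) : ℝ :=
  ((n + 1 : ℝ) * ((1 - ‖z‖ ^ 2) * ‖u‖ ^ 2 + ‖(inner ℂ z u : ℂ)‖ ^ 2)) /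
    (2 * (1 - ‖z‖ ^ 2) ^ 2)

/-- `Q_f(z) = sup_{u ≠ 0} |f'(z)u| / H_z(u,ū)^{1/2}`. -/
noncomputable def Qball (n : ℕ) (f : EuclideanSpace ℂ (Fin n) → ℂ)
    (z : EuclideanSpace ℂ (Fin n)) : ℝ :=
  sSup {r : ℝ | ∃ u : EuclideanSpace ℂ (Fin n), u ≠ 0 ∧
    r = ‖fderiv ℂ f z u‖ / Real.sqrt (bergmanH n z u)}

/-- The set of values `Q_f(z)` for `z ∈ 𝔹_n`. -/
def blochValuesBall (n : ℕ) (f : EuclideanSpace ℂ (Fin n) → ℂ) : Set ℝ :=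
  {r : ℝ | ∃ z ∈ ball (0 : EuclideanSpace ℂ (Fin n)) 1, r = Qball n f z}

/-- The Bloch seminorm `β_f = sup_{z ∈ 𝔹_n} Q_f(z)`. -/
noncomputable def blochSemiBall (n : ℕ) (f : EuclideanSpace ℂ (Fin n) → ℂ) : ℝ :=
  sSup (blochValuesBall n f)

/-- `f` is a Bloch function on `𝔹_n`. -/
def IsBlochBall (n : ℕ) (f : EuclideanSpace ℂ (Fin n) → ℂ) : Prop :=
  DifferentiableOn ℂ f (ball (0 : EuclideanSpace ℂ (Fin n)) 1) ∧
    BddAbove (blochValuesBall n f)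

/-- The Bloch norm `‖f‖_B = |f(0)| + β_f`. -/
noncomputable def blochNormBall (n : ℕ) (f : EuclideanSpace ℂ (Fin n) → ℂ) : ℝ :=
  ‖f 0‖ + blochSemiBall n f

variable {n : ℕ}

section Bergman

lemma bergmanH_zero (u : EuclideanSpace ℂ (Fin n)) :
    bergmanH n 0 u = (n + 1) / 2 * ‖u‖ ^ 2 := by
  simp only [bergmanH, norm_zero, inner_zero_left]
  ring

lemma bergmanH_zero_le {z : EuclideanSpace ℂ (Fin n)} (hz : ‖z‖ < 1)
    (u : EuclideanSpace ℂ (Fin n)) : bergmanH n 0 u ≤ bergmanH n z u := by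
  have hz₀ : 0 < 1 - ‖z‖ ^ 2 := by nlinarith [norm_nonneg z]
  have hz₁ : 1 - ‖z‖ ^ 2 ≤ 1 := by nlinarith [norm_nonneg z]
  rw [bergmanH_zero, bergmanH, le_div_iff₀ (by positivity)]
  have : (1 - ‖z‖ ^ 2) ^ 2 * ‖u‖ ^ 2 ≤ (1 - ‖z‖ ^ 2) * ‖u‖ ^ 2 + ‖(inner ℂ z u : ℂ)‖ ^ 2 := by
    nlinarith [sq_nonneg ‖u‖, sq_nonneg ‖(inner ℂ z u : ℂ)‖, mul_nonneg hz₀.le (sq_nonneg ‖u‖)]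
  calc (n + 1) / 2 * ‖u‖ ^ 2 * (2 * (1 - ‖z‖ ^ 2) ^ 2)
      = (n + 1) * ((1 - ‖z‖ ^ 2) ^ 2 * ‖u‖ ^ 2) := by ring
    _ ≤ _ := by gcongr

lemma sqrt_bergmanH_zero_mul (u : EuclideanSpace ℂ (Fin n)) :
    √(bergmanH n 0 u) * √(2 / (n + 1)) = ‖u‖ := by
  rw [← Real.sqrt_mul (by rw [bergmanH_zero]; positivity), bergmanH_zero,
    show (n + 1) / 2 * ‖u‖ ^ 2 * (2 / (n + 1)) = ‖u‖ ^ 2 by field_simp,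
    Real.sqrt_sq (norm_nonneg u)]

lemma norm_le_sqrt_bergmanH_mul {z : EuclideanSpace ℂ (Fin n)} (hz : ‖z‖ < 1)
    (u : EuclideanSpace ℂ (Fin n)) : ‖u‖ ≤ √(bergmanH n z u) * √(2 / (n + 1)) := by
  rw [← sqrt_bergmanH_zero_mul u]
  gcongr
  exact bergmanH_zero_le hz u

lemma sqrt_bergmanH_pos {z : EuclideanSpace ℂ (Fin n)} (hz : ‖z‖ < 1)
    {u : EuclideanSpace ℂ (Fin n)} (hu : u ≠ 0) : 0 < √(bergmanH n z u) := by
  refine Real.sqrt_pos.2 (lt_of_lt_of_le ?_ (bergmanH_zero_le hz u))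
  rw [bergmanH_zero]
  have := norm_pos_iff.2 hu
  positivity

end Bergman

section Qball

lemma div_sqrt_bergmanH_le {z : EuclideanSpace ℂ (Fin n)} (hz : ‖z‖ < 1)
    (L : EuclideanSpace ℂ (Fin n) →L[ℂ] ℂ) {u : EuclideanSpace ℂ (Fin n)} (hu : u ≠ 0) :
    ‖L u‖ / √(bergmanH n z u) ≤ ‖L‖ * √(2 / (n + 1)) := by
  rw [div_le_iff₀ (sqrt_bergmanH_pos hz hu)]
  calc ‖L u‖ ≤ ‖L‖ * ‖u‖ := L.le_opNorm u
    _ ≤ ‖L‖ * (√(bergmanH n z u) * √(2 / (n + 1))) := by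
        gcongr; exact norm_le_sqrt_bergmanH_mul hz u
    _ = _ := by ring

lemma Qball_nonneg (f : EuclideanSpace ℂ (Fin n) → ℂ) (z : EuclideanSpace ℂ (Fin n)) :
    0 ≤ Qball n f z :=
  Real.sSup_nonneg fun _ ⟨_, _, hr⟩ => hr ▸ by positivity

lemma Qball_le (f : EuclideanSpace ℂ (Fin n) → ℂ) {z : EuclideanSpace ℂ (Fin n)}
    (hz : ‖z‖ < 1) : Qball n f z ≤ ‖fderiv ℂ f z‖ * √(2 / (n + 1)) :=
  Real.sSup_le (by rintro _ ⟨u, hu, rfl⟩; exact div_sqrt_bergmanH_le hz _ hu) (by positivity)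

lemma Qball_zero (f : EuclideanSpace ℂ (Fin n) → ℂ) :
    Qball n f 0 = ‖fderiv ℂ f 0‖ * √(2 / (n + 1)) := by
  refine le_antisymm (Qball_le f (by simp)) ?_
  have hs : 0 < √(2 / (n + 1) : ℝ) := by positivity
  rw [← le_div_iff₀ hs]
  refine ContinuousLinearMap.opNorm_le_bound _ (div_nonneg (Qball_nonneg f 0) hs.le) fun u => ?_
  rcases eq_or_ne u 0 with rfl | hu
  · simp
  have hQ : ‖fderiv ℂ f 0 u‖ / √(bergmanH n 0 u) ≤ Qball n f 0 := by
    refine le_csSup ⟨‖fderiv ℂ f 0‖ * √(2 / (n + 1)), ?_⟩ ⟨u, hu, rfl⟩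
    rintro _ ⟨v, hv, rfl⟩
    exact div_sqrt_bergmanH_le (by simp) _ hv
  rw [div_le_iff₀ (sqrt_bergmanH_pos (by simp) hu)] at hQ
  calc ‖fderiv ℂ f 0 u‖ ≤ Qball n f 0 * √(bergmanH n 0 u) := hQ
    _ = Qball n f 0 / √(2 / (n + 1)) * (√(bergmanH n 0 u) * √(2 / (n + 1))) := by
        field_simp
    _ = _ := by rw [sqrt_bergmanH_zero_mul]

lemma Qball_add_const (f : EuclideanSpace ℂ (Fin n) → ℂ) (c : ℂ) :
    Qball n (fun z => f z + c) = Qball n f := by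
  funext z
  simp only [Qball, fderiv_add_const]

end Qball

section BlochSeminorm

lemma mem_upperBounds_blochValuesBall {f : EuclideanSpace ℂ (Fin n) → ℂ} {M : ℝ}
    (hf : ∀ z ∈ ball (0 : EuclideanSpace ℂ (Fin n)) 1, ‖fderiv ℂ f z‖ ≤ M) :
    M * √(2 / (n + 1)) ∈ upperBounds (blochValuesBall n f) := by
  rintro _ ⟨z, hz, rfl⟩
  exact (Qball_le f (mem_ball_zero_iff.1 hz)).trans (by gcongr; exact hf z hz)

lemma blochSemiBall_le {f : EuclideanSpace ℂ (Fin n) → ℂ} {M : ℝ} (hM : 0 ≤ M)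
    (hf : ∀ z ∈ ball (0 : EuclideanSpace ℂ (Fin n)) 1, ‖fderiv ℂ f z‖ ≤ M) :
    blochSemiBall n f ≤ M * √(2 / (n + 1)) :=
  Real.sSup_le (mem_upperBounds_blochValuesBall hf) (by positivity)

lemma Qball_zero_le_blochSemiBall {f : EuclideanSpace ℂ (Fin n) → ℂ}
    (hf : BddAbove (blochValuesBall n f)) : Qball n f 0 ≤ blochSemiBall n f :=
  le_csSup hf ⟨0, mem_ball_self one_pos, rfl⟩

lemma blochValuesBall_add_const (f : EuclideanSpace ℂ (Fin n) → ℂ) (c : ℂ) :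
    blochValuesBall n (fun z => f z + c) = blochValuesBall n f := by
  simp only [blochValuesBall, Qball_add_const]

lemma blochSemiBall_add_const (f : EuclideanSpace ℂ (Fin n) → ℂ) (c : ℂ) :
    blochSemiBall n (fun z => f z + c) = blochSemiBall n f := by
  rw [blochSemiBall, blochValuesBall_add_const, blochSemiBall]

end BlochSeminorm

section Affine

lemma fderiv_inner (w z : EuclideanSpace ℂ (Fin n)) :
    fderiv ℂ (fun z => (inner ℂ w z : ℂ)) z = innerSL ℂ w :=
  (innerSL ℂ w).fderiv

lemma bddAbove_blochValuesBall_inner (w : EuclideanSpace ℂ (Fin n)) :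
    BddAbove (blochValuesBall n fun z => (inner ℂ w z : ℂ)) :=
  ⟨_, mem_upperBounds_blochValuesBall fun z _ => (fderiv_inner w z ▸ innerSL_apply_norm ℂ w).le⟩

lemma isBlochBall_inner_add_const (w : EuclideanSpace ℂ (Fin n)) (c : ℂ) :
    IsBlochBall n fun z => (inner ℂ w z : ℂ) + c :=
  ⟨((innerSL ℂ w).differentiable.add_const c).differentiableOn,
    blochValuesBall_add_const (fun z => (inner ℂ w z : ℂ)) c ▸ bddAbove_blochValuesBall_inner w⟩

lemma blochSemiBall_inner (w : EuclideanSpace ℂ (Fin n)) :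
    blochSemiBall n (fun z => (inner ℂ w z : ℂ)) = ‖w‖ * √(2 / (n + 1)) := by
  refine le_antisymm (blochSemiBall_le (norm_nonneg w) fun z _ => ?_) ?_
  · rw [fderiv_inner, innerSL_apply_norm]
  · have h := Qball_zero_le_blochSemiBall (bddAbove_blochValuesBall_inner w)
    rwa [Qball_zero, fderiv_inner, innerSL_apply_norm] at h

lemma blochNormBall_inner_add_const (w : EuclideanSpace ℂ (Fin n)) (c : ℂ) :
    blochNormBall n (fun z => (inner ℂ w z : ℂ) + c) = ‖c‖ + ‖w‖ * √(2 / (n + 1)) := by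
  rw [blochNormBall, blochSemiBall_add_const, blochSemiBall_inner, inner_zero_right, zero_add]

end Affine

def PreservesBlochNorm (n : ℕ) (φ : EuclideanSpace ℂ (Fin n) → EuclideanSpace ℂ (Fin n)) :
    Prop :=
  ∀ f, IsBlochBall n f → blochNormBall n (f ∘ φ) = blochNormBall n f

namespace PreservesBlochNorm

variable {φ : EuclideanSpace ℂ (Fin n) → EuclideanSpace ℂ (Fin n)}

lemma norm_inner_add_const (hφ : PreservesBlochNorm n φ) (w : EuclideanSpace ℂ (Fin n))
    (c : ℂ) :
    ‖(inner ℂ w (φ 0) : ℂ) + c‖ + blochSemiBall n (fun z => (inner ℂ w (φ z) : ℂ)) =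
      ‖c‖ + ‖w‖ * √(2 / (n + 1)) := by
  have h := hφ _ (isBlochBall_inner_add_const w c)
  rwa [blochNormBall_inner_add_const, blochNormBall, Function.comp_def,
    blochSemiBall_add_const (fun z => (inner ℂ w (φ z) : ℂ))] at h

lemma inner_map_zero (hφ : PreservesBlochNorm n φ) (w : EuclideanSpace ℂ (Fin n)) :
    (inner ℂ w (φ 0) : ℂ) = 0 := by
  have h₀ := hφ.norm_inner_add_const w 0
  have h₁ := hφ.norm_inner_add_const w (-inner ℂ w (φ 0))
  rw [add_zero, norm_zero, zero_add] at h₀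
  rw [add_neg_cancel, norm_zero, zero_add, norm_neg] at h₁
  exact norm_eq_zero.1 (by linarith [norm_nonneg (inner ℂ w (φ 0) : ℂ)])

lemma map_zero (hφ : PreservesBlochNorm n φ) : φ 0 = 0 :=
  inner_self_eq_zero.1 (hφ.inner_map_zero (φ 0))

lemma blochSemiBall_inner_comp (hφ : PreservesBlochNorm n φ) (w : EuclideanSpace ℂ (Fin n)) :
    blochSemiBall n (fun z => (inner ℂ w (φ z) : ℂ)) = ‖w‖ * √(2 / (n + 1)) := by
  simpa [hφ.inner_map_zero w] using hφ.norm_inner_add_const w 0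

lemma eq_zero_of_inner_eqOn_zero (hφ : PreservesBlochNorm n φ) {w : EuclideanSpace ℂ (Fin n)}
    (hw : EqOn (fun z => (inner ℂ w (φ z) : ℂ)) 0 (ball 0 1)) : w = 0 := by
  have hβ : blochSemiBall n (fun z => (inner ℂ w (φ z) : ℂ)) ≤ 0 * √(2 / (n + 1)) :=
    blochSemiBall_le le_rfl fun z hz => by
      rw [(hw.eventuallyEq_of_mem (isOpen_ball.mem_nhds hz)).fderiv_eq]
      simp
  rw [hφ.blochSemiBall_inner_comp, zero_mul] at hβ
  have hs : 0 < √(2 / (n + 1) : ℝ) := by positivity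
  exact norm_le_zero_iff.1 (nonpos_of_mul_nonpos_left hβ hs)

end PreservesBlochNorm

theorem necessary_conditions_isometry_ball_general (n : ℕ)
    (φ : EuclideanSpace ℂ (Fin n) → EuclideanSpace ℂ (Fin n))
    (hiso : ∀ f : EuclideanSpace ℂ (Fin n) → ℂ, IsBlochBall n f →
      IsBlochBall n (f ∘ φ) ∧ blochNormBall n (f ∘ φ) = blochNormBall n f) :
    (∀ c : Fin n → ℂ,
      (∀ z ∈ ball (0 : EuclideanSpace ℂ (Fin n)) 1, ∑ j, c j * φ z j = 0) →
      ∀ j, c j = 0) ∧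
    φ 0 = 0 ∧
    ∀ j : Fin n, blochSemiBall n (fun z => φ z j) = Real.sqrt (2 / (n + 1)) := by
  have hφ : PreservesBlochNorm n φ := fun f hf => (hiso f hf).2
  refine ⟨fun c hc => ?_, hφ.map_zero, fun j => ?_⟩
  · have hw := hφ.eq_zero_of_inner_eqOn_zero (w := WithLp.toLp 2 (star c)) fun z hz => by
      simpa [PiLp.inner_apply, mul_comm] using hc z hz
    rw [WithLp.toLp_eq_zero, star_eq_zero] at hw
    exact congrFun hw
  · simpa [EuclideanSpace.inner_single_left] using
      hφ.blochSemiBall_inner_comp (EuclideanSpace.single j 1)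

/-- Necessary conditions for `C_φ` to be an isometry on the Bloch space of the
unit ball `𝔹_n`: the components of `φ` are linearly independent over `ℂ`,
`φ(0) = 0`, and each component has Bloch seminorm `√(2/(n+1))`. -/
theorem necessary_conditions_isometry_ball (n : ℕ)
    (φ : EuclideanSpace ℂ (Fin n) → EuclideanSpace ℂ (Fin n))
    (hmap : MapsTo φ (ball (0 : EuclideanSpace ℂ (Fin n)) 1)
      (ball (0 : EuclideanSpace ℂ (Fin n)) 1))
    (hφ : DifferentiableOn ℂ φ (ball (0 : EuclideanSpace ℂ (Fin n)) 1))
    (hiso : ∀ f : EuclideanSpace ℂ (Fin n) → ℂ, IsBlochBall n f →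
      IsBlochBall n (f ∘ φ) ∧ blochNormBall n (f ∘ φ) = blochNormBall n f) :
    (∀ c : Fin n → ℂ,
      (∀ z ∈ ball (0 : EuclideanSpace ℂ (Fin n)) 1, ∑ j, c j * φ z j = 0) →
      ∀ j, c j = 0) ∧
    φ 0 = 0 ∧
    ∀ j : Fin n, blochSemiBall n (fun z => φ z j) = Real.sqrt (2 / (n + 1)) :=
  necessary_conditions_isometry_ball_general n φ hiso
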